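/- arXiv:2402.02735 — 4 statements merged into one kernel-verified Lean document; each statement's English description precedes it below -/
import Mathlib

section
/- Let J be a natural number, ρ > 0, and a, η ∈ EuclideanSpace ℝ (Fin J). Define g(v) = ⟪η, a + v⟫ + (ρ/2)‖a + v‖² for v ∈ EuclideanSpace ℝ (Fin J). Then the vector v* with components v*ⱼ = max(0, −aⱼ − ηⱼ/ρ) lies in the nonnegative orthant {v : vⱼ ≥ 0 for all j} and satisfies g(v*) ≤ g(v) for every v in the nonnegative orthant. -/
lemma coord_min (ρ aj ηj t : ℝ) (hρ : 0 < ρ) (ht : 0 ≤ t) :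
    ηj * (aj + max 0 (-aj - ηj / ρ)) + ρ / 2 * (aj + max 0 (-aj - ηj / ρ)) ^ 2
      ≤ ηj * (aj + t) + ρ / 2 * (aj + t) ^ 2 := by
  set c : ℝ := aj + ηj / ρ with hc
  have key : ∀ s : ℝ, ηj * (aj + s) + ρ / 2 * (aj + s) ^ 2
      = ρ / 2 * (s + c) ^ 2 - ρ / 2 * (ηj / ρ) ^ 2 := by
    intro s
    rw [hc]; field_simp; ring
  rw [key, key]
  have hsq : (max 0 (-aj - ηj / ρ) + c) ^ 2 ≤ (t + c) ^ 2 := by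
    rcases le_or_gt c 0 with h | h
    · have : max 0 (-aj - ηj / ρ) = -c := by
        have e : -aj - ηj / ρ = -c := by rw [hc]; ring
        rw [e, max_eq_right (by linarith)]
      rw [this]; simp; positivity
    · have : max 0 (-aj - ηj / ρ) = 0 := by
        rw [max_eq_left]; rw [hc] at h; linarith
      rw [this, zero_add]
      have h1 : 0 ≤ c := le_of_lt h
      nlinarith
  nlinarith
/-- In the vector v-subproblem of the variable-splitting method,
the componentwise `v*ⱼ = max 0 (-aⱼ - ηⱼ/ρ)` minimizes
`g v = ⟪η, a + v⟫ + (ρ/2)‖a + v‖²` over the nonnegative orthant. -/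
theorem vsubproblem_vector_closed_form
    (J : ℕ) (ρ : ℝ) (hρ : 0 < ρ) (a η : EuclideanSpace ℝ (Fin J))
    (g : EuclideanSpace ℝ (Fin J) → ℝ)
    (hg : ∀ v, g v = (inner ℝ η (a + v) : ℝ) + (ρ / 2) * ‖a + v‖ ^ 2)
    (vstar : EuclideanSpace ℝ (Fin J))
    (hvstar : ∀ j, vstar j = max 0 (-(a j) - η j / ρ)) :
    (∀ j, 0 ≤ vstar j) ∧
      ∀ v : EuclideanSpace ℝ (Fin J), (∀ j, 0 ≤ v j) → g vstar ≤ g v := by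
  have gsum : ∀ v : EuclideanSpace ℝ (Fin J),
      g v = ∑ j, (η j * (a j + v j) + ρ / 2 * (a j + v j) ^ 2) := by
    intro v
    rw [hg]
    have hinner : (inner ℝ η (a + v) : ℝ) = ∑ j, η j * ((a + v) j) := by
      rw [PiLp.inner_apply]; simp [RCLike.inner_apply, mul_comm]
    have hnorm : ‖a + v‖ ^ 2 = ∑ j, ((a + v) j) ^ 2 := by
      rw [EuclideanSpace.norm_eq]
      rw [Real.sq_sqrt (by positivity)]
      simp [sq_abs]
    rw [hinner, hnorm, Finset.mul_sum, ← Finset.sum_add_distrib]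
    apply Finset.sum_congr rfl
    intro j _
    simp [PiLp.add_apply]
  constructor
  · intro j; rw [hvstar j]; exact le_max_left _ _
  · intro v hv
    rw [gsum, gsum]
    apply Finset.sum_le_sum
    intro j _
    rw [hvstar j]
    exact coord_min ρ (a j) (η j) (v j) hρ (hv j)
end

section
/- Let E, Y, Z be real inner product spaces with E complete, let e_x, e_p, e_c ≥ 0 and ρ, γ > 0. Let F : E → ℝ be differentiable and prox-regular with modulus e_x, i.e., F(a) ≥ F(b) − (e_x/2)‖a − b‖² + ⟪∇F(b), a − b⟫ for all a, b ∈ E. Let p(x) = P x + b_p and c(x) = C x + b_c where P : E → Y and C : E → Z are continuous linear maps satisfying ‖P u‖ ≥ e_p‖u‖ and ‖C u‖ ≥ e_c‖u‖ for all u ∈ E. Define L(x, v; η, ζ) = F(x) + ⟪η, p(x) + v⟫ + (ρ/2)‖p(x) + v‖² + ⟪ζ, c(x)⟫ + (γ/2)‖c(x)‖². Fix v ∈ Y, η ∈ Y, ζ ∈ Z, and suppose x⁺ ∈ E satisfies L(x⁺, v; η, ζ) ≤ L(x, v; η, ζ) for all x ∈ E. Then for every x ∈ E, L(x, v; η, ζ)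 − L(x⁺, v; η, ζ) ≥ ((ρ e_p² + γ e_c² − e_x)/2)‖x − x⁺‖². -/
set_option maxHeartbeats 1000000


/-- The primal descent estimate (equation (14)) in the proof of the
paper's Lemma 1: if `x⁺` minimizes the augmented Lagrangian in `x`, then for every
`x`, `L(x, v; η, ζ) − L(x⁺, v; η, ζ) ≥ ((ρ e_p² + γ e_c² − e_x)/2)‖x − x⁺‖²`. -/
theorem primal_descent_estimate
    {E Y Z : Type*} [NormedAddCommGroup E] [InnerProductSpace ℝ E] [CompleteSpace E]
    [NormedAddCommGroup Y] [InnerProductSpace ℝ Y]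
    [NormedAddCommGroup Z] [InnerProductSpace ℝ Z]
    (e_x e_p e_c : ℝ) (he_x : 0 ≤ e_x) (he_p : 0 ≤ e_p) (he_c : 0 ≤ e_c)
    (ρ γ : ℝ) (hρ : 0 < ρ) (hγ : 0 < γ)
    (F : E → ℝ) (hF : Differentiable ℝ F)
    (hprox : ∀ a b : E,
      F a ≥ F b - (e_x / 2) * ‖a - b‖ ^ 2 + (inner ℝ (gradient F b) (a - b) : ℝ))
    (P : E →L[ℝ] Y) (C : E →L[ℝ] Z) (b_p : Y) (b_c : Z)
    (p : E → Y) (hp : ∀ x, p x = P x + b_p)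
    (c : E → Z) (hc : ∀ x, c x = C x + b_c)
    (hP : ∀ u : E, e_p * ‖u‖ ≤ ‖P u‖) (hC : ∀ u : E, e_c * ‖u‖ ≤ ‖C u‖)
    (L : E → Y → Y → Z → ℝ)
    (hL : ∀ x v η ζ, L x v η ζ =
      F x + (inner ℝ η (p x + v) : ℝ) + (ρ / 2) * ‖p x + v‖ ^ 2
        + (inner ℝ ζ (c x) : ℝ) + (γ / 2) * ‖c x‖ ^ 2)
    (v η : Y) (ζ : Z) (xplus : E)
    (hmin : ∀ x : E, L xplus v η ζ ≤ L x v η ζ) :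
    ∀ x : E, L x v η ζ - L xplus v η ζ ≥
      ((ρ * e_p ^ 2 + γ * e_c ^ 2 - e_x) / 2) * ‖x - xplus‖ ^ 2 := by
  intro x
  set u : E := x - xplus with hu
  set A : ℝ := (inner ℝ η (P u) : ℝ) + ρ * (inner ℝ (P xplus + b_p + v) (P u) : ℝ)
      + (inner ℝ ζ (C u) : ℝ) + γ * (inner ℝ (C xplus + b_c) (C u) : ℝ) with hA
  set B : ℝ := (ρ / 2) * ‖P u‖ ^ 2 + (γ / 2) * ‖C u‖ ^ 2 with hB
  set K : ℝ := (inner ℝ η (P xplus + b_p + v) : ℝ) + (ρ / 2) * ‖P xplus + b_p + v‖ ^ 2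
      + (inner ℝ ζ (C xplus + b_c) : ℝ) + (γ / 2) * ‖C xplus + b_c‖ ^ 2 with hK
  -- Key expansion of L along the line xplus + t • u
  have key : ∀ t : ℝ, L (xplus + t • u) v η ζ
      = F (xplus + t • u) + K + t * A + t ^ 2 * B := by
    intro t
    have h1 : p (xplus + t • u) + v = (P xplus + b_p + v) + t • (P u) := by
      rw [hp]; simp [map_add, map_smul]; abel
    have h2 : c (xplus + t • u) = (C xplus + b_c) + t • (C u) := by
      rw [hc]; simp [map_add, map_smul]; abel
    rw [hL, h1, h2, hA, hB, hK]
    simp only [norm_add_sq_real, inner_add_right, real_inner_smul_right, norm_smul,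
      Real.norm_eq_abs, mul_pow, sq_abs]
    ring
  -- derivative of t ↦ F (xplus + t • u) at 0
  have hline : HasDerivAt (fun t : ℝ => xplus + t • u) u 0 := by
    simpa using ((hasDerivAt_id (0 : ℝ)).smul_const u).const_add xplus
  have hx0 : xplus + (0 : ℝ) • u = xplus := by simp
  have hF0 : HasDerivAt (fun t : ℝ => F (xplus + t • u)) ((fderiv ℝ F xplus) u) 0 := by
    have h2 : HasFDerivAt F (fderiv ℝ F xplus) (xplus + (0 : ℝ) • u) := by
      rw [hx0]; exact (hF xplus).hasFDerivAt
    exact h2.comp_hasDerivAt 0 hline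
  -- derivative of the full 1-d function
  have hG : HasDerivAt (fun t : ℝ => F (xplus + t • u) + K + t * A + t ^ 2 * B)
      ((fderiv ℝ F xplus) u + A) 0 := by
    have ht : HasDerivAt (fun t : ℝ => t * A) A 0 := by
      simpa using (hasDerivAt_id (0 : ℝ)).mul_const A
    have ht2 : HasDerivAt (fun t : ℝ => t ^ 2 * B) 0 0 := by
      simpa using (hasDerivAt_pow 2 (0 : ℝ)).mul_const B
    have := ((hF0.add_const K).add ht).add ht2
    rw [add_zero] at this
    exact this
  -- 0 is a local min of that function
  have hlocmin : IsLocalMin (fun t : ℝ => F (xplus + t • u) + K + t * A + t ^ 2 * B) 0 := by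
    apply Filter.Eventually.of_forall
    intro t
    have := hmin (xplus + t • u)
    rw [key t] at this
    have h0 := key 0
    have h0' : L xplus v η ζ = F xplus + K := by simpa using h0
    simp only []
    calc F (xplus + (0:ℝ) • u) + K + 0 * A + 0 ^ 2 * B
        = F xplus + K := by simp
      _ = L xplus v η ζ := h0'.symm
      _ ≤ _ := this
  -- first-order optimality
  have hzero : (fderiv ℝ F xplus) u + A = 0 := hlocmin.hasDerivAt_eq_zero hG
  have hgrad : (inner ℝ (gradient F xplus) u : ℝ) = (fderiv ℝ F xplus) u := by
    rw [gradient]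
    exact InnerProductSpace.toDual_symm_apply
  -- prox-regularity at (x, xplus)
  have hpr := hprox x xplus
  rw [← hu, hgrad] at hpr
  -- expansion at t = 1
  have hx1 : xplus + (1 : ℝ) • u = x := by rw [hu]; simp
  have hLx : L x v η ζ = F x + K + A + B := by
    have := key 1
    rw [hx1] at this
    simpa using this
  have hLxp : L xplus v η ζ = F xplus + K := by simpa using key 0
  -- quadratic lower bounds
  have hPu : e_p ^ 2 * ‖u‖ ^ 2 ≤ ‖P u‖ ^ 2 := by
    have := pow_le_pow_left₀ (mul_nonneg he_p (norm_nonneg u)) (hP u) 2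
    rwa [mul_pow] at this
  have hCu : e_c ^ 2 * ‖u‖ ^ 2 ≤ ‖C u‖ ^ 2 := by
    have := pow_le_pow_left₀ (mul_nonneg he_c (norm_nonneg u)) (hC u) 2
    rwa [mul_pow] at this
  have h1 : ρ / 2 * (e_p ^ 2 * ‖u‖ ^ 2) ≤ ρ / 2 * ‖P u‖ ^ 2 :=
    mul_le_mul_of_nonneg_left hPu (by positivity)
  have h2 : γ / 2 * (e_c ^ 2 * ‖u‖ ^ 2) ≤ γ / 2 * ‖C u‖ ^ 2 :=
    mul_le_mul_of_nonneg_left hCu (by positivity)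
  have hid : ((ρ * e_p ^ 2 + γ * e_c ^ 2 - e_x) / 2) * ‖u‖ ^ 2
      = ρ / 2 * (e_p ^ 2 * ‖u‖ ^ 2) + γ / 2 * (e_c ^ 2 * ‖u‖ ^ 2) - e_x / 2 * ‖u‖ ^ 2 := by
    ring
  rw [hLx, hLxp, hB, ge_iff_le, hid]
  linarith [hpr, hzero, h1, h2]
end

section
/- Let E, Y, Z be real inner product spaces with E complete, let e_x, e_p, e_c ≥ 0 and ρ, γ > 0 satisfy ρ e_p² + γ e_c² > e_x. Let F : E → ℝ be differentiable and prox-regular with modulus e_x, i.e., F(a) ≥ F(b) − (e_x/2)‖a − b‖² + ⟪∇F(b), a − b⟫ for all a, b ∈ E. Let p(x) = P x + b_p and c(x) = C x + b_c where P : E → Y and C : E → Z are continuous linear maps satisfying ‖P u‖ ≥ e_p‖u‖ and ‖C u‖ ≥ e_c‖u‖ for all u ∈ E. Define L(x, v; η, ζ) = F(x) + ⟪η, p(x) + v⟫ + (ρ/2)‖p(x) + v‖² + ⟪ζ, c(x)⟫ + (γ/2)‖c(x)‖². Fix v ∈ Y, η ∈ Y, ζ ∈ Z. If x⁺ ∈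 E satisfies L(x⁺, v; η, ζ) ≤ L(x, v; η, ζ) for all x ∈ E, then x⁺ is the unique global minimizer: for every x ≠ x⁺, L(x, v; η, ζ) > L(x⁺, v; η, ζ). -/
private lemma midsq {Y : Type*} [NormedAddCommGroup Y] [InnerProductSpace ℝ Y]
    (y1 y2 : Y) :
    ‖y1‖ ^ 2 + ‖y2‖ ^ 2 = 2 * ‖(2⁻¹ : ℝ) • (y1 + y2)‖ ^ 2 + 2⁻¹ * ‖y1 - y2‖ ^ 2 := by
  have h := parallelogram_law_with_norm ℝ y1 y2
  have hs : ‖(2⁻¹ : ℝ) • (y1 + y2)‖ = 2⁻¹ * ‖y1 + y2‖ := by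
    rw [norm_smul, Real.norm_eq_abs, abs_of_pos (by norm_num)]
  rw [hs]
  linear_combination -h / 2

/-- Under the penalty-size condition `ρ e_p² + γ e_c² > e_x` of the
paper's Lemma 1, a minimizer `x⁺` of the augmented Lagrangian in `x` is the unique
global minimizer. -/
theorem primal_minimizer_unique
    {E Y Z : Type*} [NormedAddCommGroup E] [InnerProductSpace ℝ E] [CompleteSpace E]
    [NormedAddCommGroup Y] [InnerProductSpace ℝ Y]
    [NormedAddCommGroup Z] [InnerProductSpace ℝ Z]
    (e_x e_p e_c : ℝ) (he_x : 0 ≤ e_x) (he_p : 0 ≤ e_p) (he_c : 0 ≤ e_c)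
    (ρ γ : ℝ) (hρ : 0 < ρ) (hγ : 0 < γ)
    (hpen : ρ * e_p ^ 2 + γ * e_c ^ 2 > e_x)
    (F : E → ℝ) (hF : Differentiable ℝ F)
    (hprox : ∀ a b : E,
      F a ≥ F b - (e_x / 2) * ‖a - b‖ ^ 2 + (inner ℝ (gradient F b) (a - b) : ℝ))
    (P : E →L[ℝ] Y) (C : E →L[ℝ] Z) (b_p : Y) (b_c : Z)
    (p : E → Y) (hp : ∀ x, p x = P x + b_p)
    (c : E → Z) (hc : ∀ x, c x = C x + b_c)
    (hP : ∀ u : E, e_p * ‖u‖ ≤ ‖P u‖) (hC : ∀ u : E, e_c * ‖u‖ ≤ ‖C u‖)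
    (L : E → Y → Y → Z → ℝ)
    (hL : ∀ x v η ζ, L x v η ζ =
      F x + (inner ℝ η (p x + v) : ℝ) + (ρ / 2) * ‖p x + v‖ ^ 2
        + (inner ℝ ζ (c x) : ℝ) + (γ / 2) * ‖c x‖ ^ 2)
    (v η : Y) (ζ : Z) (xplus : E)
    (hmin : ∀ x : E, L xplus v η ζ ≤ L x v η ζ) :
    ∀ x : E, x ≠ xplus → L x v η ζ > L xplus v η ζ := by
  intro x hx
  have hune : x - xplus ≠ 0 := sub_ne_zero.mpr hx
  set u := x - xplus with hu
  have hunorm : (0 : ℝ) < ‖u‖ := norm_pos_iff.mpr hune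
  set m := (2⁻¹ : ℝ) • (x + xplus) with hm
  -- vector midpoint facts
  have hxm : x - m = (2⁻¹ : ℝ) • u := by rw [hm, hu]; module
  have hxpm : xplus - m = -((2⁻¹ : ℝ) • u) := by rw [hm, hu]; module
  have hPu : p x + v - (p xplus + v) = P u := by
    simp only [hp, hu, map_sub]; abel
  have hCu : c x - c xplus = C u := by
    simp only [hc, hu, map_sub]; abel
  have hpm : p m + v = (2⁻¹ : ℝ) • ((p x + v) + (p xplus + v)) := by
    simp only [hp, hm, map_smul, map_add]; module
  have hcm : c m = (2⁻¹ : ℝ) • (c x + c xplus) := by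
    simp only [hc, hm, map_smul, map_add]; module
  -- scalar identities via parallelogram law
  have key1 : ‖p x + v‖ ^ 2 + ‖p xplus + v‖ ^ 2
      = 2 * ‖p m + v‖ ^ 2 + 2⁻¹ * ‖P u‖ ^ 2 := by
    rw [hpm, ← hPu]; exact midsq _ _
  have key2 : ‖c x‖ ^ 2 + ‖c xplus‖ ^ 2
      = 2 * ‖c m‖ ^ 2 + 2⁻¹ * ‖C u‖ ^ 2 := by
    rw [hcm, ← hCu]; exact midsq _ _
  have keyη : (inner ℝ η (p x + v) : ℝ) + (inner ℝ η (p xplus + v) : ℝ)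
      = 2 * (inner ℝ η (p m + v) : ℝ) := by
    have hsplit : (inner ℝ η ((p x + v) + (p xplus + v)) : ℝ)
        = (inner ℝ η (p x + v) : ℝ) + (inner ℝ η (p xplus + v) : ℝ) :=
      inner_add_right _ _ _
    rw [hpm, real_inner_smul_right, hsplit]; ring
  have keyζ : (inner ℝ ζ (c x) : ℝ) + (inner ℝ ζ (c xplus) : ℝ)
      = 2 * (inner ℝ ζ (c m) : ℝ) := by
    have hsplit : (inner ℝ ζ (c x + c xplus) : ℝ)
        = (inner ℝ ζ (c x) : ℝ) + (inner ℝ ζ (c xplus) : ℝ) :=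
      inner_add_right _ _ _
    rw [hcm, real_inner_smul_right, hsplit]; ring
  -- prox-regularity at the midpoint
  have hn : ‖(2⁻¹ : ℝ) • u‖ ^ 2 = 4⁻¹ * ‖u‖ ^ 2 := by
    rw [norm_smul, Real.norm_eq_abs, abs_of_pos (by norm_num : (0:ℝ) < 2⁻¹)]
    ring
  have keyF : F x + F xplus ≥ 2 * F m - (e_x / 4) * ‖u‖ ^ 2 := by
    have h1 := hprox x m
    have h2 := hprox xplus m
    rw [hxm, hn] at h1
    rw [hxpm, inner_neg_right, norm_neg, hn] at h2
    linarith
  -- combine into the key strong-convexity inequality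
  have k1 : (ρ / 2) * ‖p x + v‖ ^ 2 + (ρ / 2) * ‖p xplus + v‖ ^ 2
      = ρ * ‖p m + v‖ ^ 2 + (ρ / 4) * ‖P u‖ ^ 2 := by
    linear_combination (ρ / 2) * key1
  have k2 : (γ / 2) * ‖c x‖ ^ 2 + (γ / 2) * ‖c xplus‖ ^ 2
      = γ * ‖c m‖ ^ 2 + (γ / 4) * ‖C u‖ ^ 2 := by
    linear_combination (γ / 2) * key2
  have hsum : L x v η ζ + L xplus v η ζ
      ≥ 2 * L m v η ζ - (e_x / 4) * ‖u‖ ^ 2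
        + (ρ / 4) * ‖P u‖ ^ 2 + (γ / 4) * ‖C u‖ ^ 2 := by
    rw [hL x, hL xplus, hL m]
    linarith [keyF, k1, k2, keyη, keyζ]
  -- norm lower bounds
  have hPb : e_p ^ 2 * ‖u‖ ^ 2 ≤ ‖P u‖ ^ 2 := by
    have := pow_le_pow_left₀ (mul_nonneg he_p (norm_nonneg u)) (hP u) 2
    calc e_p ^ 2 * ‖u‖ ^ 2 = (e_p * ‖u‖) ^ 2 := by ring
      _ ≤ ‖P u‖ ^ 2 := this
  have hCb : e_c ^ 2 * ‖u‖ ^ 2 ≤ ‖C u‖ ^ 2 := by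
    have := pow_le_pow_left₀ (mul_nonneg he_c (norm_nonneg u)) (hC u) 2
    calc e_c ^ 2 * ‖u‖ ^ 2 = (e_c * ‖u‖) ^ 2 := by ring
      _ ≤ ‖C u‖ ^ 2 := this
  have h1 : (ρ / 4) * (e_p ^ 2 * ‖u‖ ^ 2) ≤ (ρ / 4) * ‖P u‖ ^ 2 :=
    mul_le_mul_of_nonneg_left hPb (by positivity)
  have h2 : (γ / 4) * (e_c ^ 2 * ‖u‖ ^ 2) ≤ (γ / 4) * ‖C u‖ ^ 2 :=
    mul_le_mul_of_nonneg_left hCb (by positivity)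
  have h3 : 0 < (ρ * e_p ^ 2 + γ * e_c ^ 2 - e_x) * ‖u‖ ^ 2 :=
    mul_pos (by linarith) (pow_pos hunorm 2)
  linarith [hmin m, hsum, h1, h2, h3]
end

section
/- Let E, Z be real inner product spaces with E complete, let J be a natural number and Y = EuclideanSpace ℝ (Fin J), let e_x, e_p, e_c ≥ 0 and ρ, γ > 0. Let F : E → ℝ be differentiable and prox-regular with modulus e_x, i.e., F(a) ≥ F(b) − (e_x/2)‖a − b‖² + ⟪∇F(b), a − b⟫ for all a, b ∈ E. Let p(x) = P x + b_p and c(x) = C x + b_c where P : E → Y and C : E → Z are continuous linear maps satisfying ‖P u‖ ≥ e_p‖u‖ and ‖C u‖ ≥ e_c‖u‖ for all u ∈ E. Define L(x, v; η, ζ) = F(x) + ⟪η, p(x) + v⟫ + (ρ/2)‖p(x) + v‖² + ⟪ζ, c(x)⟫ + (γ/2)‖c(x)‖². Let x ∈ E, let v ∈ Y lie in the nonnegative orthant, let η ∈ Y, ζ ∈ Z, and define one iteration of the method: x⁺ ∈ E with L(x⁺, v; η, ζ) ≤ L(x', v; η, ζ) for all x' ∈ E; v⁺ in the nonnegative orthant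 with L(x⁺, v⁺; η, ζ) ≤ L(x⁺, v'; η, ζ) for all v' in the nonnegative orthant; η⁺ = η + ρ(p(x⁺) + v⁺); ζ⁺ = ζ + γ c(x⁺). Then L(x⁺, v⁺; η⁺, ζ⁺) − L(x, v; η, ζ) ≤ ((e_x − ρ e_p² − γ e_c²)/2)‖x⁺ − x‖² + (1/ρ)‖η⁺ − η‖² + (1/γ)‖ζ⁺ − ζ‖². -/
open InnerProductSpace

lemma quad_expand {Y : Type*} [NormedAddCommGroup Y] [InnerProductSpace ℝ Y]
    (η y w : Y) (ρ : ℝ) :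
    (inner ℝ η (y + w) : ℝ) + (ρ/2) * ‖y + w‖^2 =
      ((inner ℝ η y : ℝ) + (ρ/2) * ‖y‖^2) + (inner ℝ (η + ρ • y) w : ℝ) + (ρ/2) * ‖w‖^2 := by
  rw [@norm_add_sq_real, inner_add_right, inner_add_left, real_inner_smul_left]; ring

lemma sq_deriv_zero {E Y : Type*} [NormedAddCommGroup E] [InnerProductSpace ℝ E]
    [NormedAddCommGroup Y] [InnerProductSpace ℝ Y] (P : E →L[ℝ] Y) (x₀ : E) :
    HasFDerivAt (fun x' : E => ‖P (x' - x₀)‖^2) (0 : E →L[ℝ] ℝ) x₀ := by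
  have hf : HasFDerivAt (fun x' : E => P (x' - x₀)) (P : E →L[ℝ] Y) x₀ := by
    exact P.hasFDerivAt.comp x₀ ((hasFDerivAt_id x₀).sub_const x₀)
  have h := hf.inner ℝ hf
  have hfun : (fun t : E => (inner ℝ (P (t - x₀)) (P (t - x₀)) : ℝ))
      = fun t : E => ‖P (t - x₀)‖^2 := funext fun t => real_inner_self_eq_norm_sq _
  rw [hfun] at h
  refine h.congr_fderiv ?_
  ext u
  simp [fderivInnerCLM_apply]

set_option maxHeartbeats 1000000 in
/-- The one-iteration estimate (equation (15)) of the paper's Lemma 1: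
after an x-minimization step, a v-minimization step over the nonnegative orthant,
and the two dual updates, the augmented Lagrangian changes by at most
`((e_x − ρ e_p² − γ e_c²)/2)‖x⁺ − x‖² + (1/ρ)‖η⁺ − η‖² + (1/γ)‖ζ⁺ − ζ‖²`. -/
theorem one_iteration_estimate
    {E Z : Type*} [NormedAddCommGroup E] [InnerProductSpace ℝ E] [CompleteSpace E]
    [NormedAddCommGroup Z] [InnerProductSpace ℝ Z]
    (J : ℕ)
    (e_x e_p e_c : ℝ) (he_x : 0 ≤ e_x) (he_p : 0 ≤ e_p) (he_c : 0 ≤ e_c)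
    (ρ γ : ℝ) (hρ : 0 < ρ) (hγ : 0 < γ)
    (F : E → ℝ) (hF : Differentiable ℝ F)
    (hprox : ∀ a b : E,
      F a ≥ F b - (e_x / 2) * ‖a - b‖ ^ 2 + (inner ℝ (gradient F b) (a - b) : ℝ))
    (P : E →L[ℝ] EuclideanSpace ℝ (Fin J)) (C : E →L[ℝ] Z)
    (b_p : EuclideanSpace ℝ (Fin J)) (b_c : Z)
    (p : E → EuclideanSpace ℝ (Fin J)) (hp : ∀ x, p x = P x + b_p)
    (c : E → Z) (hc : ∀ x, c x = C x + b_c)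
    (hP : ∀ u : E, e_p * ‖u‖ ≤ ‖P u‖) (hC : ∀ u : E, e_c * ‖u‖ ≤ ‖C u‖)
    (L : E → EuclideanSpace ℝ (Fin J) → EuclideanSpace ℝ (Fin J) → Z → ℝ)
    (hL : ∀ x v η ζ, L x v η ζ =
      F x + (inner ℝ η (p x + v) : ℝ) + (ρ / 2) * ‖p x + v‖ ^ 2
        + (inner ℝ ζ (c x) : ℝ) + (γ / 2) * ‖c x‖ ^ 2)
    (x : E) (v η : EuclideanSpace ℝ (Fin J)) (ζ : Z)
    (hv : ∀ j, 0 ≤ v j)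
    (xplus : E) (hxplus : ∀ x' : E, L xplus v η ζ ≤ L x' v η ζ)
    (vplus : EuclideanSpace ℝ (Fin J)) (hvplus_mem : ∀ j, 0 ≤ vplus j)
    (hvplus : ∀ v' : EuclideanSpace ℝ (Fin J), (∀ j, 0 ≤ v' j) →
      L xplus vplus η ζ ≤ L xplus v' η ζ)
    (ηplus : EuclideanSpace ℝ (Fin J)) (hη : ηplus = η + ρ • (p xplus + vplus))
    (ζplus : Z) (hζ : ζplus = ζ + γ • c xplus) :
    L xplus vplus ηplus ζplus - L x v η ζ ≤
      ((e_x - ρ * e_p ^ 2 - γ * e_c ^ 2) / 2) * ‖xplus - x‖ ^ 2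
        + (1 / ρ) * ‖ηplus - η‖ ^ 2 + (1 / γ) * ‖ζplus - ζ‖ ^ 2 := by
  set d : E := x - xplus with hd
  -- key affine expansion of L in x around xplus
  have keyP : ∀ x' : E, p x' + v = (p xplus + v) + P (x' - xplus) := by
    intro x'; rw [hp, hp, map_sub]; abel
  have keyC : ∀ x' : E, c x' = c xplus + C (x' - xplus) := by
    intro x'; rw [hc, hc, map_sub]; abel
  have hq : ∀ x' : E, L x' v η ζ = L xplus v η ζ + (F x' - F xplus)
      + (inner ℝ (η + ρ • (p xplus + v)) (P (x' - xplus)) : ℝ)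
      + (inner ℝ (ζ + γ • c xplus) (C (x' - xplus)) : ℝ)
      + (ρ/2) * ‖P (x' - xplus)‖^2 + (γ/2) * ‖C (x' - xplus)‖^2 := by
    intro x'
    rw [hL x' v η ζ, hL xplus v η ζ, keyP x', keyC x']
    linear_combination (quad_expand η (p xplus + v) (P (x' - xplus)) ρ)
      + (quad_expand ζ (c xplus) (C (x' - xplus)) γ)
  have hfun : (fun x' : E => L x' v η ζ) = fun x' : E =>
      ((((L xplus v η ζ + (F x' - F xplus))
        + (inner ℝ (η + ρ • (p xplus + v)) (P (x' - xplus)) : ℝ))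
        + (inner ℝ (ζ + γ • c xplus) (C (x' - xplus)) : ℝ))
        + ((ρ/2) * ‖P (x' - xplus)‖^2 + (γ/2) * ‖C (x' - xplus)‖^2)) := by
    funext x'; rw [hq x']; ring
  have hlinP : HasFDerivAt
      (fun x' : E => (inner ℝ (η + ρ • (p xplus + v)) (P (x' - xplus)) : ℝ))
      ((innerSL ℝ (η + ρ • (p xplus + v))).comp P) xplus := by
    have hf : HasFDerivAt (fun x' : E => P (x' - xplus)) P xplus :=
      P.hasFDerivAt.comp xplus ((hasFDerivAt_id xplus).sub_const xplus)
    exact ((innerSL ℝ (η + ρ • (p xplus + v))).hasFDerivAt.comp xplus hf :)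
  have hlinC : HasFDerivAt
      (fun x' : E => (inner ℝ (ζ + γ • c xplus) (C (x' - xplus)) : ℝ))
      ((innerSL ℝ (ζ + γ • c xplus)).comp C) xplus := by
    have hf : HasFDerivAt (fun x' : E => C (x' - xplus)) C xplus :=
      C.hasFDerivAt.comp xplus ((hasFDerivAt_id xplus).sub_const xplus)
    exact ((innerSL ℝ (ζ + γ • c xplus)).hasFDerivAt.comp xplus hf :)
  have hquad : HasFDerivAt (fun x' : E => (ρ/2) * ‖P (x' - xplus)‖^2
      + (γ/2) * ‖C (x' - xplus)‖^2) (0 : E →L[ℝ] ℝ) xplus := by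
    have h1 := ((sq_deriv_zero P xplus).const_mul (ρ/2)).add
      ((sq_deriv_zero C xplus).const_mul (γ/2))
    exact h1.congr_fderiv (by simp)
  have hφ : HasFDerivAt (fun x' : E => L x' v η ζ)
      ((((fderiv ℝ F xplus) + ((innerSL ℝ (η + ρ • (p xplus + v))).comp P))
        + ((innerSL ℝ (ζ + γ • c xplus)).comp C)) + (0 : E →L[ℝ] ℝ)) xplus := by
    rw [hfun]
    exact ((((hasFDerivAt_const _ _).add ((hF xplus).hasFDerivAt.sub_const _)).add
      hlinP).add hlinC).add hquad |>.congr_fderiv (by simp)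
  have hmin : IsLocalMin (fun x' : E => L x' v η ζ) xplus :=
    Filter.Eventually.of_forall hxplus
  have hG0 : ((((fderiv ℝ F xplus) + ((innerSL ℝ (η + ρ • (p xplus + v))).comp P))
        + ((innerSL ℝ (ζ + γ • c xplus)).comp C)) + (0 : E →L[ℝ] ℝ)) = 0 :=
    hφ.fderiv.symm.trans hmin.fderiv_eq_zero
  have hgrad : ∀ u : E, (inner ℝ (gradient F xplus) u : ℝ) = fderiv ℝ F xplus u := by
    intro u
    have h := (hF xplus).hasGradientAt
    rw [hasGradientAt_iff_hasFDerivAt] at h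
    rw [h.fderiv]
    simp
  have hlin : (inner ℝ (gradient F xplus) d : ℝ)
      + (inner ℝ (η + ρ • (p xplus + v)) (P d) : ℝ)
      + (inner ℝ (ζ + γ • c xplus) (C d) : ℝ) = 0 := by
    have h := congrArg (fun T : E →L[ℝ] ℝ => T d) hG0
    simp only [ContinuousLinearMap.add_apply, ContinuousLinearMap.zero_apply,
      ContinuousLinearMap.comp_apply, innerSL_apply_apply] at h
    rw [hgrad]
    linarith [h]
  -- x-step estimate
  have hPd : e_p^2 * ‖d‖^2 ≤ ‖P d‖^2 := by
    have h := hP d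
    nlinarith [norm_nonneg (P d), norm_nonneg d, mul_nonneg he_p (norm_nonneg d)]
  have hCd : e_c^2 * ‖d‖^2 ≤ ‖C d‖^2 := by
    have h := hC d
    nlinarith [norm_nonneg (C d), norm_nonneg d, mul_nonneg he_c (norm_nonneg d)]
  have hPd' : (ρ/2) * (e_p^2 * ‖d‖^2) ≤ (ρ/2) * ‖P d‖^2 :=
    mul_le_mul_of_nonneg_left hPd (by positivity)
  have hCd' : (γ/2) * (e_c^2 * ‖d‖^2) ≤ (γ/2) * ‖C d‖^2 :=
    mul_le_mul_of_nonneg_left hCd (by positivity)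
  have hnorm : ‖xplus - x‖ = ‖d‖ := by rw [hd, norm_sub_rev]
  have hxstep : L xplus v η ζ - L x v η ζ ≤
      ((e_x - ρ * e_p ^ 2 - γ * e_c ^ 2) / 2) * ‖xplus - x‖ ^ 2 := by
    have h1 := hprox x xplus
    have h2 := hq x
    rw [hnorm]
    rw [← hd] at h1 h2
    linarith [h1, h2, hlin, hPd', hCd']
  -- v-step estimate
  have hvstep : L xplus vplus η ζ ≤ L xplus v η ζ := hvplus v hv
  -- dual-step estimate
  have hdual : L xplus vplus ηplus ζplus - L xplus vplus η ζ =
      (1/ρ) * ‖ηplus - η‖^2 + (1/γ) * ‖ζplus - ζ‖^2 := by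
    have h1 : ηplus - η = ρ • (p xplus + vplus) := by rw [hη]; abel
    have h2 : ζplus - ζ = γ • c xplus := by rw [hζ]; abel
    have e1 : (inner ℝ ηplus (p xplus + vplus) : ℝ)
        = (inner ℝ η (p xplus + vplus) : ℝ) + (1/ρ) * ‖ηplus - η‖^2 := by
      rw [h1, hη, inner_add_left, real_inner_smul_left, real_inner_self_eq_norm_sq,
        norm_smul, Real.norm_eq_abs, abs_of_pos hρ, mul_pow]
      field_simp
    have e2 : (inner ℝ ζplus (c xplus) : ℝ)
        = (inner ℝ ζ (c xplus) : ℝ) + (1/γ) * ‖ζplus - ζ‖^2 := by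
      rw [h2, hζ, inner_add_left, real_inner_smul_left, real_inner_self_eq_norm_sq,
        norm_smul, Real.norm_eq_abs, abs_of_pos hγ, mul_pow]
      field_simp
    rw [hL, hL, e1, e2]
    ring
  linarith [hxstep, hvstep, hdual]
end
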